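/- (Theorem 2, selection consistency) If √n·τ_{g,n}² → ∞ and log(τ_{g,n}²)/n → 0 as n → ∞ for every group g = 1,…,G, then lim_{n→∞} μ_n({x ∈ ℝ^p : 𝒜_n^Med(x) = 𝒜}) = 1; i.e., the median thresholding estimator is model-selection consistent. -/

import Mathlib

open MeasureTheory ProbabilityTheory Filter Classical
open scoped ENNReal

/-- The standard normal cumulative distribution function `Φ`. -/
noncomputable def stdNormalCDF (x : ℝ) : ℝ :=
  (gaussianReal 0 1 (Set.Iic x)).toReal

/-- The standard normal quantile function `Φ⁻¹`. -/
noncomputable def stdNormalQuantile (p : ℝ) : ℝ :=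
  sInf {x : ℝ | p ≤ stdNormalCDF x}

/-!
On the event that every coordinate of `β̂` lies within `K / √n` of `β⁰`, which by Chebyshev's
inequality has probability at least `1 - p σ² / K²`, the selected model is eventually exact.
For a null group `n ‖β̂_g‖²` stays bounded, so the factor `(1 + n τ²)^(-m_g/2) → 0` pushes
`l_{g,n}` above `1/2` and the group is set to zero. For a group with `β⁰_i ≠ 0` the exponent
grows linearly in `n` and beats the penalty `(m_g/2) log (1 + n τ²) = o(n)`, so `l_{g,n} ≤ 1/4`;
then `Q_{g,n}` stays bounded and the threshold `σ Q_{g,n} / √n` eventually falls below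
`|β⁰_i| / 4 ≤ (1 - B_{g,n}) |β̂_i|`. Letting `K → ∞` gives the theorem.
-/

open Topology

lemma stdNormalCDF_eq_cdf : stdNormalCDF = cdf (gaussianReal 0 1) := by
  ext x
  rw [cdf_eq_real]
  rfl

lemma exists_le_stdNormalCDF {r : ℝ} (hr : r < 1) : ∃ x, r ≤ stdNormalCDF x := by
  rw [stdNormalCDF_eq_cdf]
  exact (((tendsto_cdf_atTop _).eventually (lt_mem_nhds hr)).exists).imp fun _ h => h.le

lemma stdNormalQuantile_le {r x : ℝ} (hr : 0 < r) (hx : r ≤ stdNormalCDF x) :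
    stdNormalQuantile r ≤ x := by
  -- `0 < r` makes the set bounded below; otherwise `sInf` would be the junk value `0`.
  refine csInf_le ?_ hx
  rw [stdNormalCDF_eq_cdf] at *
  obtain ⟨y, hy⟩ := ((tendsto_cdf_atBot (gaussianReal 0 1)).eventually (gt_mem_nhds hr)).exists
  refine ⟨y, fun z hz => ?_⟩
  by_contra! hzy
  exact (hz.trans ((cdf _).mono hzy.le)).not_gt hy

lemma tendsto_natCast_mul_atTop_of_sqrt {a : ℕ → ℝ} (ha : ∀ n, 0 ≤ a n)
    (h : Tendsto (fun n : ℕ => √(n : ℝ) * a n) atTop atTop) :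
    Tendsto (fun n : ℕ => (n : ℝ) * a n) atTop atTop := by
  refine tendsto_atTop_mono' atTop ?_ h
  filter_upwards [eventually_ge_atTop 1] with n hn
  exact mul_le_mul_of_nonneg_right (Real.sqrt_le_self_iff.2 (Or.inr (Nat.one_le_cast.2 hn))) (ha n)

lemma tendsto_log_one_add_natCast_div :
    Tendsto (fun n : ℕ => Real.log (1 + n) / n) atTop (𝓝 0) := by
  refine ((Real.tendsto_pow_log_div_mul_add_atTop 1 (-1) 1 one_ne_zero).comp
    (tendsto_atTop_add_const_left atTop 1 tendsto_natCast_atTop_atTop)).congr fun n => ?_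
  simp

lemma tendsto_log_one_add_natCast_mul_div {a : ℕ → ℝ} (ha : ∀ n, 0 < a n)
    (h : Tendsto (fun n : ℕ => Real.log (a n) / n) atTop (𝓝 0)) :
    Tendsto (fun n : ℕ => Real.log (1 + n * a n) / n) atTop (𝓝 0) := by
  have habs : Tendsto (fun n : ℕ => |Real.log (a n)| / n) atTop (𝓝 0) := by
    simpa [abs_div] using h.abs
  have hupper := tendsto_log_one_add_natCast_div.add habs
  rw [add_zero] at hupper
  refine squeeze_zero (fun n => div_nonneg (Real.log_nonneg ?_) n.cast_nonneg) (fun n => ?_)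
    hupper
  · have := mul_nonneg n.cast_nonneg (ha n).le
    linarith
  · rw [← add_div]
    gcongr
    have hexp : 1 + n * a n ≤ (1 + n) * Real.exp |Real.log (a n)| := by
      have h1 : 1 ≤ Real.exp |Real.log (a n)| := Real.one_le_exp (abs_nonneg _)
      have h2 : a n ≤ Real.exp |Real.log (a n)| := by
        calc a n = Real.exp (Real.log (a n)) := (Real.exp_log (ha n)).symm
          _ ≤ _ := Real.exp_le_exp.2 (le_abs_self _)
      nlinarith [n.cast_nonneg (α := ℝ)]
    calc Real.log (1 + n * a n) ≤ Real.log ((1 + n) * Real.exp |Real.log (a n)|) :=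
          Real.log_le_log (by have := ha n; positivity) hexp
      _ = Real.log (1 + n) + |Real.log (a n)| := by
          rw [Real.log_mul (by positivity) (Real.exp_pos _).ne', Real.log_exp]

lemma tendsto_div_sqrt_natCast (K : ℝ) : Tendsto (fun n : ℕ => K / √(n : ℝ)) atTop (𝓝 0) :=
  tendsto_const_nhds.div_atTop (Real.tendsto_sqrt_atTop.comp tendsto_natCast_atTop_atTop)

lemma measure_compl_ball_pi_gaussianReal_le {ι : Type*} [Fintype ι] (β : ι → ℝ) (v : NNReal)
    {r : ℝ} (hr : 0 < r) :
    Measure.pi (fun i => gaussianReal (β i) v) (Metric.ball β r)ᶜ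
      ≤ ENNReal.ofReal (Fintype.card ι * v / r ^ 2) := by
  have hsub : (Metric.ball β r)ᶜ ⊆ ⋃ i, Function.eval i ⁻¹' {y | r ≤ |y - β i|} := by
    intro x hx
    simpa [dist_pi_lt_iff hr, Real.dist_eq] using hx
  have hcoord (i : ι) : Measure.pi (fun i => gaussianReal (β i) v)
      (Function.eval i ⁻¹' {y | r ≤ |y - β i|}) ≤ ENNReal.ofReal (v / r ^ 2) := by
    rw [(measurePreserving_eval _ i).measure_preimage
      (measurableSet_le measurable_const (by fun_prop)).nullMeasurableSet]
    simpa [integral_id_gaussianReal, variance_id_gaussianReal] using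
      meas_ge_le_variance_div_sq (X := id) (memLp_id_gaussianReal 2) hr
  calc _ ≤ ∑ i, Measure.pi (fun i => gaussianReal (β i) v)
        (Function.eval i ⁻¹' {y | r ≤ |y - β i|}) :=
        (measure_mono hsub).trans (measure_iUnion_fintype_le _ _)
    _ ≤ ∑ _ : ι, ENNReal.ofReal (v / r ^ 2) := Finset.sum_le_sum fun i _ => hcoord i
    _ = ENNReal.ofReal (Fintype.card ι * v / r ^ 2) := by
        rw [Finset.sum_const, Finset.card_univ, nsmul_eq_mul, ← ENNReal.ofReal_natCast,
          ← ENNReal.ofReal_mul (by positivity), mul_div_assoc]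

lemma measure_compl_ball_div_sqrt_le {ι : Type*} [Fintype ι] (β : ι → ℝ) (σ : ℝ) {K : ℝ}
    (hK : 0 < K) {n : ℕ} (hn : 0 < n) :
    Measure.pi (fun i => gaussianReal (β i) (σ ^ 2 / n).toNNReal) (Metric.ball β (K / √(n : ℝ)))ᶜ
      ≤ ENNReal.ofReal (Fintype.card ι * σ ^ 2 / K ^ 2) := by
  have hn' : (0 : ℝ) < n := Nat.cast_pos.2 hn
  convert measure_compl_ball_pi_gaussianReal_le β _ (by positivity : 0 < K / √(n : ℝ)) using 2
  rw [Real.coe_toNNReal _ (by positivity), div_pow, Real.sq_sqrt hn'.le]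
  field_simp

lemma exists_pos_ofReal_div_sq_le (a : ℝ) {ε : ℝ≥0∞} (hε : 0 < ε) :
    ∃ K > 0, ENNReal.ofReal (a / K ^ 2) ≤ ε := by
  have h : Tendsto (fun K : ℝ => ENNReal.ofReal (a / K ^ 2)) atTop (𝓝 0) := by
    simpa using ENNReal.tendsto_ofReal
      (tendsto_const_nhds.div_atTop (tendsto_pow_atTop two_ne_zero))
  exact ((eventually_gt_atTop 0).and (ENNReal.tendsto_nhds_zero.1 h ε hε)).exists

lemma tendsto_measure_one_of_compl {α : Type*} [MeasurableSpace α] {μ : ℕ → Measure α}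
    [∀ n, IsProbabilityMeasure (μ n)] {S : ℕ → Set α}
    (h : Tendsto (fun n => μ n (S n)ᶜ) atTop (𝓝 0)) :
    Tendsto (fun n => μ n (S n)) atTop (𝓝 1) := by
  have hlower : Tendsto (fun n => 1 - μ n (S n)ᶜ) atTop (𝓝 1) := by
    simpa using ENNReal.Tendsto.sub tendsto_const_nhds h (Or.inl ENNReal.one_ne_top)
  refine tendsto_of_tendsto_of_tendsto_of_le_of_le hlower tendsto_const_nhds (fun n => ?_)
    (fun n => prob_le_one)
  rw [tsub_le_iff_right, ← measure_univ (μ := μ n)]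
  exact measure_univ_le_add_compl _

lemma one_sub_one_div_one_add_le_one {A : ℝ} (hA : 0 ≤ A) : 1 - 1 / (1 + A) ≤ 1 := by
  have : 0 ≤ 1 / (1 + A) := by positivity
  linarith

lemma half_le_one_sub_one_div_one_add {A : ℝ} (hA : 1 ≤ A) : 1 / 2 ≤ 1 - 1 / (1 + A) := by
  have : 1 / (1 + A) ≤ 1 / 2 := one_div_le_one_div_of_le (by norm_num) (by linarith)
  linarith

section Ball

variable {ι : Type*} [Fintype ι] {x β : ι → ℝ} {r : ℝ}

lemma sum_sq_le_of_mem_ball (hx : x ∈ Metric.ball β r) {s : Finset ι} (hβ : ∀ i ∈ s, β i = 0) :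
    ∑ i ∈ s, x i ^ 2 ≤ s.card * r ^ 2 := by
  have hsq (i) (hi : i ∈ s) : x i ^ 2 ≤ r ^ 2 := by
    have hxi : |x i| < r := by
      simpa [Real.dist_eq, hβ i hi] using (dist_le_pi_dist x β i).trans_lt hx
    rw [← sq_abs]
    exact pow_le_pow_left₀ (abs_nonneg _) hxi.le 2
  simpa using Finset.sum_le_card_nsmul s _ _ hsq

lemma half_abs_le_abs_of_mem_ball (hx : x ∈ Metric.ball β r) {i : ι} (hr : r ≤ |β i| / 2) :
    |β i| / 2 ≤ |x i| := by
  have hxi : |x i - β i| < r := by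
    simpa [Real.dist_eq] using (dist_le_pi_dist x β i).trans_lt hx
  have := abs_sub_abs_le_abs_sub (β i) (x i)
  rw [abs_sub_comm] at this
  linarith

end Ball

/-- `l_{g,n}` for a group `s` with slab variance `τ²`, at the least squares estimate `x`. -/
noncomputable def spikeProb {ι : Type*} (π₀ σ τ2 : ℝ) (n : ℕ) (s : Finset ι) (x : ι → ℝ) : ℝ :=
  π₀ / (π₀ + (1 - π₀) * (1 + n * τ2) ^ (-(s.card : ℝ) / 2) *
    Real.exp ((1 - 1 / (1 + n * τ2)) * n * (∑ i ∈ s, x i ^ 2) / (2 * σ ^ 2)))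

section SpikeProb

variable {ι : Type*} [Fintype ι] {π₀ : ℝ} {τ2 : ℕ → ℝ} {s : Finset ι} {β : ι → ℝ}

lemma eventually_half_le_spikeProb (hπ₀ : 0 < π₀) (hπ₁ : π₀ < 1) (σ : ℝ)
    (hτ2 : ∀ n, 0 ≤ τ2 n) (hnτ : Tendsto (fun n : ℕ => n * τ2 n) atTop atTop)
    (hs : s.Nonempty) (hβ : ∀ i ∈ s, β i = 0) (K : ℝ) :
    ∀ᶠ n : ℕ in atTop, ∀ x ∈ Metric.ball β (K / √(n : ℝ)),
      1 / 2 ≤ spikeProb π₀ σ (τ2 n) n s x := by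
  set c := s.card * K ^ 2 / (2 * σ ^ 2) with hc_def
  have hlim : Tendsto (fun n : ℕ => (1 - π₀) * (1 + n * τ2 n) ^ (-(1 / 2 : ℝ)) * Real.exp c)
      atTop (𝓝 0) := by
    simpa using (((tendsto_rpow_neg_atTop (by norm_num : (0 : ℝ) < 1 / 2)).comp
      (tendsto_atTop_add_const_left _ 1 hnτ)).const_mul (1 - π₀)).mul_const (Real.exp c)
  filter_upwards [hlim.eventually (gt_mem_nhds hπ₀), eventually_gt_atTop 0] with n hsmall hn x hx
  have hn' : (0 : ℝ) < n := Nat.cast_pos.2 hn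
  have hA : 0 ≤ n * τ2 n := mul_nonneg hn'.le (hτ2 n)
  set E := (1 - 1 / (1 + n * τ2 n)) * n * (∑ i ∈ s, x i ^ 2) / (2 * σ ^ 2) with hE_def
  have hE : E ≤ c :=
    calc E ≤ 1 * n * (s.card * (K / √n) ^ 2) / (2 * σ ^ 2) := by
          rw [hE_def]
          gcongr
          · exact one_sub_one_div_one_add_le_one hA
          · exact sum_sq_le_of_mem_ball hx hβ
      _ = c := by rw [hc_def, div_pow, Real.sq_sqrt hn'.le]; field_simp
  have hm : -(s.card : ℝ) / 2 ≤ -(1 / 2) := by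
    have : (1 : ℝ) ≤ s.card := Nat.one_le_cast.2 hs.card_pos
    linarith
  set D := (1 - π₀) * (1 + n * τ2 n) ^ (-(s.card : ℝ) / 2) * Real.exp E with hD_def
  have hD : D ≤ (1 - π₀) * (1 + n * τ2 n) ^ (-(1 / 2 : ℝ)) * Real.exp c := by
    have : 0 ≤ 1 - π₀ := by linarith
    rw [hD_def]
    gcongr
    linarith
  have hD0 : 0 ≤ D :=
    mul_nonneg (mul_nonneg (by linarith) (Real.rpow_nonneg (by linarith) _)) (Real.exp_pos _).le
  rw [spikeProb, le_div_iff₀ (by linarith)]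
  linarith

lemma eventually_spikeProb_le_quarter (hπ₀ : 0 < π₀) (hπ₁ : π₀ < 1) {σ : ℝ} (hσ : σ ≠ 0)
    (hnτ : Tendsto (fun n : ℕ => n * τ2 n) atTop atTop)
    (hlog : Tendsto (fun n : ℕ => Real.log (1 + n * τ2 n) / n) atTop (𝓝 0))
    {i₀ : ι} (hi₀ : i₀ ∈ s) (hβ : β i₀ ≠ 0) (K : ℝ) :
    ∀ᶠ n : ℕ in atTop, ∀ x ∈ Metric.ball β (K / √(n : ℝ)),
      spikeProb π₀ σ (τ2 n) n s x ≤ 1 / 4 := by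
  set c := β i₀ ^ 2 / (16 * σ ^ 2) with hc_def
  have hc : 0 < c := by positivity
  have hgrow : Tendsto (fun n : ℕ => (c - s.card / 2 * (Real.log (1 + n * τ2 n) / n)) * n)
      atTop atTop := by
    refine Tendsto.pos_mul_atTop hc ?_ tendsto_natCast_atTop_atTop
    simpa using tendsto_const_nhds.sub (hlog.const_mul ((s.card : ℝ) / 2))
  filter_upwards [eventually_gt_atTop 0, hnτ.eventually_ge_atTop 1,
    hgrow.eventually_ge_atTop (Real.log (3 * π₀ / (1 - π₀))),
    (tendsto_div_sqrt_natCast K).eventually (ge_mem_nhds (half_pos (abs_pos.2 hβ)))]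
    with n hn hA hlarge hr x hx
  have hn' : (0 : ℝ) < n := Nat.cast_pos.2 hn
  have hsum : β i₀ ^ 2 / 4 ≤ ∑ i ∈ s, x i ^ 2 :=
    calc β i₀ ^ 2 / 4 = (|β i₀| / 2) ^ 2 := by rw [div_pow, sq_abs]; norm_num
      _ ≤ |x i₀| ^ 2 := by gcongr; exact half_abs_le_abs_of_mem_ball hx hr
      _ = x i₀ ^ 2 := sq_abs _
      _ ≤ _ := Finset.single_le_sum (fun i _ => sq_nonneg (x i)) hi₀
  set E := (1 - 1 / (1 + n * τ2 n)) * n * (∑ i ∈ s, x i ^ 2) / (2 * σ ^ 2)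
  have hE : c * n ≤ E := by
    have hhalf := half_le_one_sub_one_div_one_add hA
    rw [le_div_iff₀ (by positivity)]
    calc c * n * (2 * σ ^ 2) = 1 / 2 * n * (β i₀ ^ 2 / 4) := by rw [hc_def]; field_simp; ring
      _ ≤ _ := by gcongr
  have hexp : Real.log (3 * π₀ / (1 - π₀)) ≤
      Real.log (1 + n * τ2 n) * (-(s.card : ℝ) / 2) + E := by
    have : (c - s.card / 2 * (Real.log (1 + n * τ2 n) / n)) * n
        = c * n + Real.log (1 + n * τ2 n) * (-(s.card : ℝ) / 2) := by field_simp; ring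
    linarith
  have hD : 3 * π₀ ≤ (1 - π₀) * (1 + n * τ2 n) ^ (-(s.card : ℝ) / 2) * Real.exp E := by
    rw [Real.log_le_iff_le_exp (div_pos (by positivity) (by linarith)),
      div_le_iff₀ (by linarith)] at hexp
    calc 3 * π₀ ≤ _ := hexp
      _ = _ := by
        rw [Real.rpow_def_of_pos (by positivity), Real.exp_add]
        ring
  rw [spikeProb, div_le_iff₀ (by linarith)]
  linarith

end SpikeProb

lemma eventually_median_ne_zero {ι : Type*} [Fintype ι] {β : ι → ℝ} {i₀ : ι} (hβ : β i₀ ≠ 0)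
    {σ : ℝ} (hσ : 0 ≤ σ) (K : ℝ) {τ2 : ℕ → ℝ}
    (hnτ : Tendsto (fun n : ℕ => n * τ2 n) atTop atTop)
    {B : ℕ → ℝ} (hB : ∀ n, B n = 1 / (1 + n * τ2 n)) {l Q med : ℕ → (ι → ℝ) → ℝ}
    (hl : ∀ᶠ n : ℕ in atTop, ∀ x ∈ Metric.ball β (K / √(n : ℝ)), l n x ≤ 1 / 4)
    (hQ : ∀ n x, Q n x = stdNormalQuantile (1 / (2 * (1 - min (1 / 2) (l n x)))))
    (hmed : ∀ n x, med n x = if 1 / 2 ≤ l n x then 0 else Real.sign (x i₀) *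
      max ((1 - B n) * |x i₀| - σ / √(n : ℝ) * Q n x * √(1 - B n)) 0) :
    ∀ᶠ n : ℕ in atTop, ∀ x ∈ Metric.ball β (K / √(n : ℝ)), med n x ≠ 0 := by
  obtain ⟨C, hC⟩ := exists_le_stdNormalCDF (by norm_num : (2 / 3 : ℝ) < 1)
  have hβ2 : 0 < |β i₀| / 2 := half_pos (abs_pos.2 hβ)
  filter_upwards [hl, hnτ.eventually_ge_atTop 1,
    (tendsto_div_sqrt_natCast K).eventually (ge_mem_nhds hβ2),
    (tendsto_div_sqrt_natCast (σ * max C 0)).eventually (gt_mem_nhds (half_pos hβ2))]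
    with n hln hA hr hthr x hx
  have hlx := hln x hx
  have hQC : Q n x ≤ C := by
    rw [hQ, min_eq_right (by linarith)]
    refine stdNormalQuantile_le (one_div_pos.2 (by linarith)) ?_
    calc _ ≤ (2 / 3 : ℝ) := by rw [div_le_iff₀ (by linarith)]; linarith
      _ ≤ _ := hC
  have hB1 : 1 / 2 ≤ 1 - B n := hB n ▸ half_le_one_sub_one_div_one_add hA
  have hB2 : 1 - B n ≤ 1 := hB n ▸ one_sub_one_div_one_add_le_one (by linarith)
  have hxi := half_abs_le_abs_of_mem_ball hx hr
  have hpos : 0 < (1 - B n) * |x i₀| - σ / √(n : ℝ) * Q n x * √(1 - B n) := by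
    have hsqrt : √(1 - B n) ≤ 1 := Real.sqrt_le_one.2 hB2
    rw [sub_pos]
    calc σ / √(n : ℝ) * Q n x * √(1 - B n) ≤ σ / √(n : ℝ) * max C 0 * 1 := by
          gcongr
          exact hQC.trans (le_max_left _ _)
      _ = σ * max C 0 / √(n : ℝ) := by ring
      _ < |β i₀| / 2 / 2 := hthr
      _ ≤ (1 - B n) * |x i₀| := by nlinarith
  rw [hmed, if_neg (by linarith), max_eq_left hpos.le]
  refine mul_ne_zero (fun h => ?_) hpos.ne'
  rw [Real.sign_eq_zero_iff] at h
  rw [h, abs_zero] at hxi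
  linarith

lemma eventually_exists_median_ne_zero_iff {ι : Type*} [Fintype ι] {β : ι → ℝ} {σ π₀ : ℝ}
    (hσ : 0 < σ) (hπ₀ : 0 < π₀) (hπ₁ : π₀ < 1) {τ2 : ℕ → ℝ} (hτ2 : ∀ n, 0 ≤ τ2 n)
    (hnτ : Tendsto (fun n : ℕ => n * τ2 n) atTop atTop)
    (hlog : Tendsto (fun n : ℕ => Real.log (1 + n * τ2 n) / n) atTop (𝓝 0))
    {s : Finset ι} (hs : s.Nonempty) {B : ℕ → ℝ} (hB : ∀ n, B n = 1 / (1 + n * τ2 n))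
    {l Q : ℕ → (ι → ℝ) → ℝ} (hl : ∀ n x, l n x = spikeProb π₀ σ (τ2 n) n s x)
    (hQ : ∀ n x, Q n x = stdNormalQuantile (1 / (2 * (1 - min (1 / 2) (l n x)))))
    {med : ℕ → (ι → ℝ) → ι → ℝ}
    (hmed : ∀ n x, ∀ i ∈ s, med n x i = if 1 / 2 ≤ l n x then 0 else Real.sign (x i) *
      max ((1 - B n) * |x i| - σ / √(n : ℝ) * Q n x * √(1 - B n)) 0) (K : ℝ) :
    ∀ᶠ n : ℕ in atTop, ∀ x ∈ Metric.ball β (K / √(n : ℝ)),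
      (∃ i ∈ s, med n x i ≠ 0) ↔ ∃ i ∈ s, β i ≠ 0 := by
  by_cases hβ : ∃ i ∈ s, β i ≠ 0
  · obtain ⟨i₀, hi₀, hβi₀⟩ := hβ
    have hquarter := eventually_spikeProb_le_quarter hπ₀ hπ₁ hσ.ne' hnτ hlog hi₀ hβi₀ K
    simp only [← hl] at hquarter
    filter_upwards [eventually_median_ne_zero hβi₀ hσ.le K hnτ hB hquarter hQ
      (fun n x => hmed n x i₀ hi₀)] with n hn x hx
    exact iff_of_true ⟨i₀, hi₀, hn x hx⟩ ⟨i₀, hi₀, hβi₀⟩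
  · push Not at hβ
    filter_upwards [eventually_half_le_spikeProb hπ₀ hπ₁ σ hτ2 hnτ hs hβ K] with n hn x hx
    refine iff_of_false ?_ (by simpa using hβ)
    rintro ⟨i, hi, hne⟩
    exact hne (by rw [hmed n x i hi, if_pos (hl n x ▸ hn x hx)])

/-- **Theorem 2, selection consistency of median thresholding.**
Orthogonal design with Gaussian errors: the least squares estimator has law
`μ_n = ⊗_{i=1}^p N(β⁰_i, σ²/n)`, coordinates partitioned into nonempty groups by
`gr : Fin p → Fin G`.  Spike-and-slab posterior quantities: shrinkage
`B_{g,n} = 1/(1 + n τ_{g,n}²)`, spike probability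
`l_{g,n} = π₀/(π₀ + (1-π₀)(1+nτ_{g,n}²)^{-m_g/2} exp((1-B_{g,n}) n ‖β̂_g^LS‖²/(2σ²)))`,
threshold `Q_{g,n} = Φ⁻¹(1/(2(1 - min(1/2, l_{g,n}))))`, and the median thresholding
estimator `β̂^Med_{gj} = sgn(β̂^LS_{gj}) ((1-B_{g,n})|β̂^LS_{gj}| - (σ/√n) Q_{g,n} √(1-B_{g,n}))₊`
(set to `0` for group `g` when `l_{g,n} ≥ 1/2`).  If `√n τ_{g,n}² → ∞` and
`log(τ_{g,n}²)/n → 0` for every `g`, the selected model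
`𝒜_n^Med = {g : β̂^Med_{n,g} ≠ 0}` satisfies `μ_n(𝒜_n^Med = 𝒜) → 1`, where
`𝒜 = {g : β⁰_g ≠ 0}`. -/
theorem median_thresholding_selection_consistency
    (p G : ℕ) (gr : Fin p → Fin G) (hgr : Function.Surjective gr)
    (β0 : Fin p → ℝ) (σ : ℝ) (hσ : 0 < σ)
    (π₀ : ℝ) (hπ₀ : 0 < π₀) (hπ₁ : π₀ < 1)
    (τ2 : Fin G → ℕ → ℝ) (hτ2 : ∀ g n, 0 < τ2 g n)
    (hτlim : ∀ g, Tendsto (fun n : ℕ => Real.sqrt (n : ℝ) * τ2 g n) atTop atTop)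
    (hτlog : ∀ g, Tendsto (fun n : ℕ => Real.log (τ2 g n) / (n : ℝ)) atTop (nhds 0))
    (μ : ℕ → Measure (Fin p → ℝ))
    (hμ : ∀ n, μ n =
      Measure.pi (fun i : Fin p => gaussianReal (β0 i) (Real.toNNReal (σ ^ 2 / n))))
    (bnorm : Fin G → (Fin p → ℝ) → ℝ)
    (hbnorm : ∀ g x, bnorm g x =
      Real.sqrt (∑ i ∈ Finset.univ.filter (fun i => gr i = g), x i ^ 2))
    (B : Fin G → ℕ → ℝ)
    (hB : ∀ g n, B g n = 1 / (1 + (n : ℝ) * τ2 g n))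
    (l : Fin G → ℕ → (Fin p → ℝ) → ℝ)
    (hl : ∀ g n x, l g n x = π₀ /
      (π₀ + (1 - π₀) *
        (1 + (n : ℝ) * τ2 g n) ^
          (-((Finset.univ.filter (fun i => gr i = g)).card : ℝ) / 2) *
        Real.exp ((1 - B g n) * (n : ℝ) * bnorm g x ^ 2 / (2 * σ ^ 2))))
    (Q : Fin G → ℕ → (Fin p → ℝ) → ℝ)
    (hQ : ∀ g n x, Q g n x =
      stdNormalQuantile (1 / (2 * (1 - min (1 / 2) (l g n x)))))
    (med : ℕ → (Fin p → ℝ) → (Fin p → ℝ))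
    (hmed : ∀ n x i, med n x i =
      if 1 / 2 ≤ l (gr i) n x then 0
      else Real.sign (x i) *
        max ((1 - B (gr i) n) * |x i| -
          σ / Real.sqrt (n : ℝ) * Q (gr i) n x * Real.sqrt (1 - B (gr i) n)) 0) :
    Tendsto (fun n => μ n
        {x | {g : Fin G | ∃ i, gr i = g ∧ med n x i ≠ 0} =
             {g : Fin G | ∃ i, gr i = g ∧ β0 i ≠ 0}}) atTop (nhds 1) := by
  have hnτ g := tendsto_natCast_mul_atTop_of_sqrt (fun n => (hτ2 g n).le) (hτlim g)
  have hlog g := tendsto_log_one_add_natCast_mul_div (hτ2 g) (hτlog g)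
  have hgroup (g : Fin G) : (Finset.univ.filter (gr · = g)).Nonempty :=
    Finset.filter_nonempty_iff.2 ((hgr g).imp fun i hi => ⟨Finset.mem_univ i, hi⟩)
  have hspike (g n x) :
      l g n x = spikeProb π₀ σ (τ2 g n) n (Finset.univ.filter (gr · = g)) x := by
    rw [hl, hB, hbnorm, Real.sq_sqrt (Finset.sum_nonneg fun i _ => sq_nonneg _)]
    rfl
  have hsel (K : ℝ) (g : Fin G) := eventually_exists_median_ne_zero_iff (β := β0) hσ hπ₀ hπ₁
    (fun n => (hτ2 g n).le) (hnτ g) (hlog g) (hgroup g) (hB g) (hspike g) (hQ g) (med := med)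
    (fun n x i hi => by rw [hmed, (Finset.mem_filter.1 hi).2]) K
  have (n : ℕ) : IsProbabilityMeasure (μ n) := hμ n ▸ inferInstance
  refine tendsto_measure_one_of_compl (ENNReal.tendsto_nhds_zero.2 fun ε hε => ?_)
  obtain ⟨K, hK, hKε⟩ := exists_pos_ofReal_div_sq_le (p * σ ^ 2) hε
  filter_upwards [eventually_all.2 (hsel K), eventually_gt_atTop 0] with n hsel hn
  calc _ ≤ μ n (Metric.ball β0 (K / √(n : ℝ)))ᶜ := by
        refine measure_mono (Set.compl_subset_compl.2 fun x hx => Set.ext fun g => ?_)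
        simpa using hsel g x hx
    _ ≤ ENNReal.ofReal (p * σ ^ 2 / K ^ 2) := by
        simpa [hμ] using measure_compl_ball_div_sqrt_le β0 σ hK hn
    _ ≤ ε := hKε
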